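/- arXiv:1004.1668 — 2 statements merged into one kernel-verified Lean document; each statement's English description precedes it below -/
import Mathlib

section
/- A complex number ξ is algebraic over ℚ if and only if ω(ξ) = 0. -/
/-- `Ω_n(ξ, H)`: the infimum (in fact minimum) of `|P(ξ)|` over nonzero integer
polynomials `P` of degree at most `n`, height at most `H`, with `P(ξ) ≠ 0`. -/
noncomputable def mahlerOmegaCap (ξ : ℂ) (n H : ℕ) : ℝ :=
  sInf {x : ℝ | ∃ P : Polynomial ℤ, P ≠ 0 ∧ P.natDegree ≤ n ∧
    (∀ k, |P.coeff k| ≤ (H : ℤ)) ∧ Polynomial.aeval ξ P ≠ 0 ∧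
    x = ‖Polynomial.aeval ξ P‖}

/-- `ω_n(ξ, H) = - log Ω_n(ξ, H) / (n log H)`, so that `Ω_n(ξ,H) = H ^ (-n ω_n(ξ,H))`. -/
noncomputable def mahlerOmegaNH (ξ : ℂ) (n H : ℕ) : ℝ :=
  - Real.log (mahlerOmegaCap ξ n H) / (n * Real.log H)

/-- `ω_n(ξ) = limsup_{H → ∞} ω_n(ξ, H)`, as an extended real number. -/
noncomputable def mahlerOmegaN (ξ : ℂ) (n : ℕ) : EReal :=
  Filter.limsup (fun H : ℕ => (mahlerOmegaNH ξ n H : EReal)) Filter.atTop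

/-- `ω(ξ) = limsup_{n → ∞} ω_n(ξ)`, as an extended real number. -/
noncomputable def mahlerOmega (ξ : ℂ) : EReal :=
  Filter.limsup (fun n : ℕ => mahlerOmegaN ξ n) Filter.atTop

/-- `ν(ξ)`: the least positive integer `n` with `ω_n(ξ) = ∞`, or `∞` if there is none. -/
noncomputable def mahlerNu (ξ : ℂ) : ℕ∞ :=
  sInf {N : ℕ∞ | ∃ m : ℕ, N = m ∧ 0 < m ∧ mahlerOmegaN ξ m = ⊤}

/-- The Mahler class of a complex number: `0` for `A`-numbers (`ω(ξ) = 0`), `1` for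
`S`-numbers (`0 < ω(ξ) < ∞`), `2` for `U`-numbers (`ω(ξ) = ∞`, `ν(ξ) < ∞`), and
`3` for `T`-numbers (`ω(ξ) = ∞`, `ν(ξ) = ∞`). -/
noncomputable def mahlerClass (ξ : ℂ) : ℕ :=
  if mahlerOmega ξ = 0 then 0
  else if mahlerOmega ξ < ⊤ then 1
  else if mahlerNu ξ < ⊤ then 2
  else 3

/-!
If `ξ` is algebraic, then for `P(ξ) ≠ 0` the number `a ^ n P(ξ)` (with `a ξ` integral) is a
nonzero algebraic integer of `ℚ(ξ)`; its norm is a nonzero integer, and its other conjugates are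
`O(H)`, so `|P(ξ)| ≫_n H ^ (1 - d)` with `d = [ℚ(ξ) : ℚ]`. Hence `ω_n(ξ) ≤ (d - 1) / n → 0`.

If `ξ` is transcendental, Dirichlet's box principle applied to the `(H + 1) ^ (n + 1)` values
`P(ξ)`, `0 ≤ P.coeff k ≤ H`, yields a nonzero `P` of height `≤ H` with
`|P(ξ)| ≪_n H ^ (1 - q)` whenever `2 q + 2 ≤ n + 1`. Taking `q = ⌊n / 3⌋` gives
`ω_n(ξ) ≥ (q - 1) / n ≥ 1 / 4` for large `n`.
-/

open Polynomial Filter Topology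

/-- `mahlerPolys n H` is `𝒫_{n,H} ∪ {0}`. -/
def mahlerPolys (n H : ℕ) : Set ℤ[X] :=
  {P | P.natDegree ≤ n ∧ ∀ k, |P.coeff k| ≤ (H : ℤ)}

section mahlerPolys

variable {n H : ℕ}

theorem one_mem_mahlerPolys (hH : 1 ≤ H) : (1 : ℤ[X]) ∈ mahlerPolys n H := by
  refine ⟨by simp, fun k => ?_⟩
  rw [coeff_one]
  split_ifs <;> simp [hH]

theorem finite_mahlerPolys (n H : ℕ) : (mahlerPolys n H).Finite := by
  refine Set.Finite.of_finite_image (f := fun P (k : Fin (n + 1)) => P.coeff k) ?_ ?_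
  · refine (Set.Finite.pi fun _ => Set.finite_Icc (-(H : ℤ)) H).subset ?_
    rintro _ ⟨P, hP, rfl⟩ k -
    exact abs_le.mp (hP.2 k)
  · rintro P hP Q hQ hPQ
    ext k
    by_cases hk : k < n + 1
    · exact congrFun hPQ ⟨k, hk⟩
    · rw [coeff_eq_zero_of_natDegree_lt (by linarith [hP.1]),
        coeff_eq_zero_of_natDegree_lt (by linarith [hQ.1])]

theorem norm_aeval_le_of_mem_mahlerPolys (z : ℂ) {P : ℤ[X]} (hP : P ∈ mahlerPolys n H) :
    ‖aeval z P‖ ≤ (n + 1) * H * max 1 ‖z‖ ^ n := by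
  have hterm : ∀ k ∈ Finset.range (n + 1), ‖P.coeff k • z ^ k‖ ≤ H * max 1 ‖z‖ ^ n := by
    intro k hk
    rw [zsmul_eq_mul, norm_mul, norm_pow, Complex.norm_intCast]
    gcongr
    · exact_mod_cast hP.2 k
    · exact (pow_le_pow_left₀ (norm_nonneg z) (le_max_right 1 _) k).trans
        (pow_le_pow_right₀ (le_max_left _ _) (Finset.mem_range_succ_iff.mp hk))
  calc ‖aeval z P‖ = ‖∑ k ∈ Finset.range (n + 1), P.coeff k • z ^ k‖ := by
        rw [aeval_eq_sum_range' (Nat.lt_succ_of_le hP.1)]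
    _ ≤ ∑ k ∈ Finset.range (n + 1), ‖P.coeff k • z ^ k‖ := norm_sum_le _ _
    _ ≤ (n + 1) * H * max 1 ‖z‖ ^ n := by
        grw [Finset.sum_le_card_nsmul _ _ _ hterm]
        simp [mul_assoc]

theorem degreeLTEquiv_symm_mem_mahlerPolys {w : Fin (n + 1) → ℤ} (hw : ∀ k, |w k| ≤ H) :
    ((degreeLTEquiv ℤ (n + 1)).symm w : ℤ[X]) ∈ mahlerPolys n H := by
  set P := (degreeLTEquiv ℤ (n + 1)).symm w
  have hdeg : (P : ℤ[X]).natDegree ≤ n :=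
    natDegree_le_iff_degree_le.mpr <| mem_degreeLE.mp <| degreeLT_succ_eq_degreeLE (R := ℤ) ▸ P.2
  refine ⟨hdeg, fun k => ?_⟩
  by_cases hk : k < n + 1
  · have : (P : ℤ[X]).coeff k = w ⟨k, hk⟩ :=
      congrFun ((degreeLTEquiv ℤ (n + 1)).apply_symm_apply w) ⟨k, hk⟩
    exact this ▸ hw _
  · simp [coeff_eq_zero_of_natDegree_lt (lt_of_le_of_lt hdeg (by omega : n < k))]

end mahlerPolys

section mahlerOmegaCap

variable {ξ : ℂ} {n H : ℕ}

theorem mahlerOmegaCap_eq_sInf_image : mahlerOmegaCap ξ n H =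
    sInf ((fun P => ‖aeval ξ P‖) '' {P | P ∈ mahlerPolys n H ∧ aeval ξ P ≠ 0}) := by
  refine congrArg sInf (Set.ext fun x => ⟨?_, ?_⟩)
  · rintro ⟨P, -, hPn, hPH, hP0, rfl⟩
    exact ⟨P, ⟨⟨hPn, hPH⟩, hP0⟩, rfl⟩
  · rintro ⟨P, ⟨⟨hPn, hPH⟩, hP0⟩, rfl⟩
    exact ⟨P, fun h => hP0 (by simp [h]), hPn, hPH, hP0, rfl⟩

theorem nonempty_norm_aeval_image (hH : 1 ≤ H) :
    ((fun P => ‖aeval ξ P‖) '' {P | P ∈ mahlerPolys n H ∧ aeval ξ P ≠ 0}).Nonempty :=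
  ⟨_, 1, ⟨one_mem_mahlerPolys hH, by simp⟩, rfl⟩

theorem mahlerOmegaCap_le {P : ℤ[X]} (hP : P ∈ mahlerPolys n H) (hP0 : aeval ξ P ≠ 0) :
    mahlerOmegaCap ξ n H ≤ ‖aeval ξ P‖ := by
  rw [mahlerOmegaCap_eq_sInf_image]
  exact csInf_le ⟨0, by rintro _ ⟨Q, -, rfl⟩; positivity⟩ ⟨P, ⟨hP, hP0⟩, rfl⟩

theorem le_mahlerOmegaCap (hH : 1 ≤ H) {b : ℝ}
    (hb : ∀ P ∈ mahlerPolys n H, aeval ξ P ≠ 0 → b ≤ ‖aeval ξ P‖) :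
    b ≤ mahlerOmegaCap ξ n H := by
  rw [mahlerOmegaCap_eq_sInf_image]
  refine le_csInf (nonempty_norm_aeval_image hH) ?_
  rintro _ ⟨P, ⟨hP, hP0⟩, rfl⟩
  exact hb P hP hP0

theorem mahlerOmegaCap_pos (hH : 1 ≤ H) : 0 < mahlerOmegaCap ξ n H := by
  rw [mahlerOmegaCap_eq_sInf_image]
  obtain ⟨P, ⟨-, hP0⟩, hP⟩ := (nonempty_norm_aeval_image hH).csInf_mem
    (((finite_mahlerPolys n H).subset fun _ => And.left).image _)
  exact hP ▸ norm_pos_iff.mpr hP0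

theorem mahlerOmegaNH_nonneg (hH : 1 ≤ H) : 0 ≤ mahlerOmegaNH ξ n H := by
  have hcap : mahlerOmegaCap ξ n H ≤ 1 := by
    simpa using mahlerOmegaCap_le (ξ := ξ) (one_mem_mahlerPolys (n := n) hH) (by simp)
  have hlog : 0 ≤ Real.log H := Real.log_nonneg (by exact_mod_cast hH)
  exact div_nonneg (neg_nonneg.mpr (Real.log_nonpos (mahlerOmegaCap_pos hH).le hcap))
    (by positivity)

theorem mahlerOmegaNH_le (hn : 0 < n) (hH : 2 ≤ H) {c e : ℝ} (hc : 0 < c)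
    (hcap : c / (H : ℝ) ^ e ≤ mahlerOmegaCap ξ n H) :
    mahlerOmegaNH ξ n H ≤ (e - Real.log c / Real.log H) / n := by
  have hH0 : (0 : ℝ) < H := by positivity
  have hlogH : 0 < Real.log H := Real.log_pos (by exact_mod_cast hH)
  have hlog : Real.log c - e * Real.log H ≤ Real.log (mahlerOmegaCap ξ n H) := by
    rw [← Real.log_rpow hH0, ← Real.log_div hc.ne' (by positivity)]
    exact Real.log_le_log (by positivity) hcap
  rw [mahlerOmegaNH, div_le_div_iff₀ (by positivity) (by positivity)]
  field_simp
  nlinarith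

theorem le_mahlerOmegaNH (hn : 0 < n) (hH : 2 ≤ H) {c e : ℝ} (hc : 0 < c)
    (hcap : mahlerOmegaCap ξ n H ≤ c / (H : ℝ) ^ e) :
    (e - Real.log c / Real.log H) / n ≤ mahlerOmegaNH ξ n H := by
  have hH0 : (0 : ℝ) < H := by positivity
  have hlogH : 0 < Real.log H := Real.log_pos (by exact_mod_cast hH)
  have hlog : Real.log (mahlerOmegaCap ξ n H) ≤ Real.log c - e * Real.log H := by
    rw [← Real.log_rpow hH0, ← Real.log_div hc.ne' (by positivity)]
    exact Real.log_le_log (mahlerOmegaCap_pos (by omega)) hcap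
  rw [mahlerOmegaNH, div_le_div_iff₀ (by positivity) (by positivity)]
  field_simp
  nlinarith

end mahlerOmegaCap

section mahlerOmegaN

variable {ξ : ℂ} {n : ℕ}

theorem tendsto_sub_div_log_div (c e : ℝ) (n : ℕ) :
    Tendsto (fun H : ℕ => (e - Real.log c / Real.log H) / n) atTop (𝓝 (e / n)) := by
  have hlog : Tendsto (fun H : ℕ => Real.log H) atTop atTop :=
    Real.tendsto_log_atTop.comp tendsto_natCast_atTop_atTop
  simpa using ((tendsto_const_nhds (x := e)).sub
    ((tendsto_const_nhds (x := Real.log c)).div_atTop hlog)).div_const (n : ℝ)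

theorem mahlerOmegaN_le (hn : 0 < n) {c e : ℝ} (hc : 0 < c)
    (hcap : ∀ᶠ H : ℕ in atTop, c / (H : ℝ) ^ e ≤ mahlerOmegaCap ξ n H) :
    mahlerOmegaN ξ n ≤ ((e / n : ℝ) : EReal) := by
  refine (limsup_le_limsup ?_).trans_eq
    (EReal.tendsto_coe.mpr (tendsto_sub_div_log_div c e n)).limsup_eq
  filter_upwards [hcap, eventually_ge_atTop 2] with H hH h2
  exact EReal.coe_le_coe (mahlerOmegaNH_le hn h2 hc hH)

theorem le_mahlerOmegaN (hn : 0 < n) {c e : ℝ} (hc : 0 < c)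
    (hcap : ∀ᶠ H : ℕ in atTop, mahlerOmegaCap ξ n H ≤ c / (H : ℝ) ^ e) :
    ((e / n : ℝ) : EReal) ≤ mahlerOmegaN ξ n := by
  refine (EReal.tendsto_coe.mpr (tendsto_sub_div_log_div c e n)).limsup_eq.symm.trans_le
    (limsup_le_limsup ?_)
  filter_upwards [hcap, eventually_ge_atTop 2] with H hH h2
  exact EReal.coe_le_coe (le_mahlerOmegaNH hn h2 hc hH)

theorem mahlerOmegaN_nonneg (ξ : ℂ) (n : ℕ) : 0 ≤ mahlerOmegaN ξ n :=
  le_limsup_of_frequently_le ((eventually_ge_atTop 1).mono fun _ hH =>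
    EReal.coe_nonneg.mpr (mahlerOmegaNH_nonneg hH)).frequently

theorem mahlerOmega_nonneg (ξ : ℂ) : 0 ≤ mahlerOmega ξ :=
  le_limsup_of_frequently_le (Frequently.of_forall (mahlerOmegaN_nonneg ξ))

end mahlerOmegaN

theorem IsIntegral.pow_smul_aeval {R A : Type*} [CommRing R] [CommRing A] [Algebra R A]
    {a : R} {x : A} (hx : IsIntegral R (a • x)) {P : R[X]} {n : ℕ} (hP : P.natDegree ≤ n) :
    IsIntegral R (a ^ n • aeval x P) := by
  have hscale : a ^ P.natDegree • aeval x P = aeval (a • x) (P.scaleRoots a) := by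
    simpa [aeval_def, Algebra.smul_def] using (scaleRoots_eval₂_mul (algebraMap R A) x a).symm
  rw [← Nat.sub_add_cancel hP, pow_add, mul_smul, hscale]
  exact ((IsIntegral.of_mem_of_fg _ hx.fg_adjoin_singleton _
    (aeval_mem_adjoin_singleton _ _))).smul _

theorem one_le_prod_norm_embeddings {K : Type*} [Field K] [Algebra ℚ K] [FiniteDimensional ℚ K]
    {y : K} (hy : IsIntegral ℤ y) (hy0 : y ≠ 0) : 1 ≤ ∏ σ : K →ₐ[ℚ] ℂ, ‖σ y‖ := by
  obtain ⟨z, hz⟩ := IsIntegrallyClosed.isIntegral_iff.mp (Algebra.isIntegral_norm ℚ hy)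
  have hz0 : z ≠ 0 := by
    rintro rfl
    exact Algebra.norm_ne_zero_iff.mpr hy0 (by rw [← hz, map_zero])
  rw [← norm_prod, ← Algebra.norm_eq_prod_embeddings, ← hz]
  simpa using (Int.cast_le (R := ℝ)).mpr (Int.one_le_abs hz0)

theorem exists_div_pow_le_norm_aeval_algHom {K : Type*} [Field K] [Algebra ℚ K]
    [FiniteDimensional ℚ K] {α : K} {a : ℤ} (ha : a ≠ 0) (hα : IsIntegral ℤ (a • α)) (σ₀ : K →ₐ[ℚ] ℂ) (n : ℕ) :
    ∃ c : ℝ, 0 < c ∧ ∀ H : ℕ, ∀ P ∈ mahlerPolys n H, aeval α P ≠ 0 →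
      c / (H : ℝ) ^ (Fintype.card (K →ₐ[ℚ] ℂ) - 1) ≤ ‖aeval (σ₀ α) P‖ := by
  classical
  set E := Finset.univ.erase σ₀
  set A : ℝ := |(a : ℝ)| ^ n
  set C : (K →ₐ[ℚ] ℂ) → ℝ := fun σ => A * ((n + 1) * max 1 ‖σ α‖ ^ n)
  refine ⟨(A * ∏ σ ∈ E, C σ)⁻¹, by positivity, fun H P hP hP0 => ?_⟩
  set y : K := a ^ n • aeval α P
  have hnorm : ∀ σ : K →ₐ[ℚ] ℂ, ‖σ y‖ = A * ‖aeval (σ α) P‖ := by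
    intro σ
    have hσ : σ (aeval α P) = aeval (σ α) P := (aeval_algHom_apply (σ.restrictScalars ℤ) α P).symm
    rw [map_zsmul, hσ, norm_zsmul ℝ]
    simp [A]
  have hprod : 1 ≤ ‖σ₀ y‖ * ∏ σ ∈ E, ‖σ y‖ := by
    rw [Finset.mul_prod_erase _ (fun σ => ‖σ y‖) (Finset.mem_univ σ₀)]
    exact one_le_prod_norm_embeddings (hα.pow_smul_aeval hP.1)
      (show a ^ n • aeval α P ≠ 0 by
        have := algebraRat.charZero K
        rw [zsmul_eq_mul]; exact mul_ne_zero (Int.cast_ne_zero.mpr (pow_ne_zero n ha)) hP0)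
  have hconj : ∏ σ ∈ E, ‖σ y‖ ≤ (H : ℝ) ^ E.card * ∏ σ ∈ E, C σ := by
    rw [← Finset.prod_const, ← Finset.prod_mul_distrib]
    gcongr with σ
    calc ‖σ y‖ = A * ‖aeval (σ α) P‖ := hnorm σ
      _ ≤ A * ((n + 1) * H * max 1 ‖σ α‖ ^ n) :=
        mul_le_mul_of_nonneg_left (norm_aeval_le_of_mem_mahlerPolys _ hP) (by positivity)
      _ = H * C σ := by ring
  rw [Finset.card_erase_of_mem (Finset.mem_univ _), Finset.card_univ] at hconj
  refine div_le_of_le_mul₀ (by positivity) (norm_nonneg _)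
    ((inv_le_iff_one_le_mul₀' (by positivity)).mpr ?_)
  calc 1 ≤ ‖σ₀ y‖ * ∏ σ ∈ E, ‖σ y‖ := hprod
    _ ≤ A * ‖aeval (σ₀ α) P‖ * ((H : ℝ) ^ (Fintype.card (K →ₐ[ℚ] ℂ) - 1) * ∏ σ ∈ E, C σ) := by
      rw [hnorm]; gcongr
    _ = _ := by ring

open IntermediateField in
theorem exists_div_pow_le_norm_aeval_of_isAlgebraic {ξ : ℂ} (hξ : IsAlgebraic ℚ ξ) :
    ∃ d : ℕ, ∀ n : ℕ, ∃ c : ℝ, 0 < c ∧ ∀ H : ℕ, ∀ P ∈ mahlerPolys n H, aeval ξ P ≠ 0 →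
      c / (H : ℝ) ^ d ≤ ‖aeval ξ P‖ := by
  have := adjoin.finiteDimensional hξ.isIntegral
  set α := AdjoinSimple.gen ℚ ξ
  obtain ⟨a, ha, hα⟩ := ((IsFractionRing.isAlgebraic_iff ℤ ℚ ℚ⟮ξ⟯).mpr
    (Algebra.IsAlgebraic.isAlgebraic α)).exists_integral_multiple
  refine ⟨Fintype.card (ℚ⟮ξ⟯ →ₐ[ℚ] ℂ) - 1, fun n => ?_⟩
  obtain ⟨c, hc, hbound⟩ := exists_div_pow_le_norm_aeval_algHom ha hα (ℚ⟮ξ⟯).val n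
  refine ⟨c, hc, fun H P hP hP0 => ?_⟩
  have hval : aeval ξ P = (ℚ⟮ξ⟯).val (aeval α P) :=
    aeval_algHom_apply ((ℚ⟮ξ⟯).val.restrictScalars ℤ) α P
  exact hbound H P hP fun h => hP0 (by rw [hval, h, map_zero])

theorem mahlerOmega_nonpos_of_isAlgebraic {ξ : ℂ} (hξ : IsAlgebraic ℚ ξ) :
    mahlerOmega ξ ≤ 0 := by
  obtain ⟨d, hd⟩ := exists_div_pow_le_norm_aeval_of_isAlgebraic hξ
  have hω : ∀ n, 0 < n → mahlerOmegaN ξ n ≤ ((d / n : ℝ) : EReal) := by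
    intro n hn
    obtain ⟨c, hc, hP⟩ := hd n
    refine mahlerOmegaN_le hn hc ((eventually_ge_atTop 1).mono fun H hH => ?_)
    rw [Real.rpow_natCast]
    exact le_mahlerOmegaCap hH (hP H)
  have hlim : Tendsto (fun n : ℕ => ((d / n : ℝ) : EReal)) atTop (𝓝 0) :=
    EReal.tendsto_coe.mpr (tendsto_const_div_atTop_nhds_zero_nat (d : ℝ))
  exact (limsup_le_limsup ((eventually_gt_atTop 0).mono hω)).trans_eq hlim.limsup_eq

theorem floor_div_mem_Icc {x δ : ℝ} {m : ℕ} (hδ : 0 < δ) (hx : |x| ≤ m * δ) :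
    ⌊x / δ⌋ ∈ Finset.Icc (-(m : ℤ)) m := by
  obtain ⟨hlo, hhi⟩ := abs_le.mp hx
  rw [Finset.mem_Icc, Int.le_floor, Int.floor_le_iff, le_div_iff₀ hδ, div_lt_iff₀ hδ]
  push_cast
  constructor <;> nlinarith

theorem abs_sub_lt_of_floor_div_eq {x y δ : ℝ} (hδ : 0 < δ) (h : ⌊x / δ⌋ = ⌊y / δ⌋) :
    |x - y| < δ := by
  have := Int.abs_sub_lt_one_of_floor_eq_floor h
  rwa [← sub_div, abs_div, abs_of_pos hδ, div_lt_one hδ] at this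

theorem Complex.exists_ne_norm_sub_le_of_card_lt {ι : Type*} {s : Finset ι} {v : ι → ℂ} {S : ℝ}
    {m : ℕ} (hS : 0 < S) (hm : 0 < m) (hv : ∀ i ∈ s, ‖v i‖ ≤ S)
    (hs : (2 * m + 1) ^ 2 < s.card) :
    ∃ i ∈ s, ∃ j ∈ s, i ≠ j ∧ ‖v i - v j‖ ≤ 2 * S / m := by
  set δ := S / m
  have hδ : 0 < δ := by positivity
  have hSδ : S = m * δ := (mul_div_cancel₀ S (by positivity)).symm
  set t := Finset.Icc (-(m : ℤ)) m ×ˢ Finset.Icc (-(m : ℤ)) m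
  have hmaps : Set.MapsTo (fun i => (⌊(v i).re / δ⌋, ⌊(v i).im / δ⌋)) s t := fun i hi =>
    Finset.mem_product.mpr
      ⟨floor_div_mem_Icc hδ (hSδ ▸ (abs_re_le_norm _).trans (hv i hi)),
        floor_div_mem_Icc hδ (hSδ ▸ (abs_im_le_norm _).trans (hv i hi))⟩
  have hcard : t.card < s.card := by
    rw [Finset.card_product, Int.card_Icc, ← sq]
    convert hs using 2
    omega
  obtain ⟨i, hi, j, hj, hij, hcell⟩ := Finset.exists_ne_map_eq_of_card_lt_of_maps_to hcard hmaps
  have hre := abs_sub_lt_of_floor_div_eq hδ (congrArg Prod.fst hcell)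
  have him := abs_sub_lt_of_floor_div_eq hδ (congrArg Prod.snd hcell)
  refine ⟨i, hi, j, hj, hij, ?_⟩
  calc ‖v i - v j‖ ≤ |(v i - v j).re| + |(v i - v j).im| := norm_le_abs_re_add_abs_im _
    _ ≤ 2 * δ := by rw [sub_re, sub_im]; linarith
    _ = 2 * S / m := by ring

theorem exists_mem_mahlerPolys_norm_aeval_le (ξ : ℂ) {n q H : ℕ} (hq : 2 * q + 2 ≤ n + 1)
    (hH : 3 ≤ H) : ∃ P ∈ mahlerPolys n H, P ≠ 0 ∧
      ‖aeval ξ P‖ ≤ 2 * ((n + 1) * H * max 1 ‖ξ‖ ^ n) / (H + 1) ^ q := by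
  classical
  set e := (degreeLTEquiv ℤ (n + 1)).symm
  set s := Fintype.piFinset fun _ : Fin (n + 1) => Finset.Icc (0 : ℤ) H
  have hs : ∀ w ∈ s, ∀ k, 0 ≤ w k ∧ w k ≤ H := fun w hw k =>
    Finset.mem_Icc.mp (Fintype.mem_piFinset.mp hw k)
  have hcard : (2 * (H + 1) ^ q + 1) ^ 2 < s.card := by
    have hsq : 9 < (H + 1) ^ 2 := by nlinarith
    have hIcc : ((H : ℤ) + 1 - 0).toNat = H + 1 := by omega
    rw [Fintype.card_piFinset, Finset.prod_const, Int.card_Icc, hIcc, Finset.card_univ,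
      Fintype.card_fin]
    calc (2 * (H + 1) ^ q + 1) ^ 2 ≤ 9 * ((H + 1) ^ q) ^ 2 := by
          nlinarith [Nat.one_le_pow q (H + 1) (by omega)]
      _ < (H + 1) ^ 2 * ((H + 1) ^ q) ^ 2 := by gcongr
      _ = (H + 1) ^ (2 * q + 2) := by ring
      _ ≤ (H + 1) ^ (n + 1) := Nat.pow_le_pow_right (by omega) hq
  obtain ⟨f, hf, g, hg, hfg, hclose⟩ := Complex.exists_ne_norm_sub_le_of_card_lt
    (v := fun w => aeval ξ (e w : ℤ[X])) (by positivity) (by positivity)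
    (fun w hw => norm_aeval_le_of_mem_mahlerPolys ξ
      (degreeLTEquiv_symm_mem_mahlerPolys fun k =>
        abs_le.mpr ⟨by linarith [hs w hw k], (hs w hw k).2⟩))
    hcard
  refine ⟨e (f - g), degreeLTEquiv_symm_mem_mahlerPolys fun k => ?_, ?_, ?_⟩
  · have := hs f hf k
    have := hs g hg k
    rw [Pi.sub_apply, abs_le]
    constructor <;> linarith
  · exact (Submodule.coe_eq_zero.not).mpr (e.map_ne_zero_iff.mpr (sub_ne_zero.mpr hfg))
  · rw [map_sub, Submodule.coe_sub, map_sub]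
    exact_mod_cast hclose

theorem sub_one_div_le_mahlerOmegaN_of_transcendental {ξ : ℂ} (hξ : Transcendental ℚ ξ)
    {n q : ℕ} (hq : 2 * q + 2 ≤ n + 1) : ((((q : ℝ) - 1) / n : ℝ) : EReal) ≤ mahlerOmegaN ξ n := by
  set c : ℝ := 2 * ((n + 1) * max 1 ‖ξ‖ ^ n)
  refine le_mahlerOmegaN (by omega) (c := c) (by positivity)
    ((eventually_ge_atTop 3).mono fun H hH => ?_)
  obtain ⟨P, hP, hP0, hsmall⟩ := exists_mem_mahlerPolys_norm_aeval_le ξ hq hH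
  have hPξ : aeval ξ P ≠ 0 := fun h =>
    hξ ((IsFractionRing.isAlgebraic_iff ℤ ℚ ℂ).mp ⟨P, hP0, h⟩)
  have hH0 : (0 : ℝ) < H := by positivity
  calc mahlerOmegaCap ξ n H ≤ ‖aeval ξ P‖ := mahlerOmegaCap_le hP hPξ
    _ ≤ 2 * ((n + 1) * H * max 1 ‖ξ‖ ^ n) / (H + 1) ^ q := hsmall
    _ ≤ c * H / H ^ q := by
      rw [show 2 * ((n + 1) * H * max 1 ‖ξ‖ ^ n) = c * H by ring]
      gcongr
      linarith
    _ = c / (H : ℝ) ^ ((q : ℝ) - 1) := by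
      rw [Real.rpow_sub_one hH0.ne', Real.rpow_natCast, div_div_eq_mul_div]

theorem mahlerOmega_pos_of_transcendental {ξ : ℂ} (hξ : Transcendental ℚ ξ) :
    0 < mahlerOmega ξ := by
  have hω : ∀ᶠ n in atTop, ((1 / 4 : ℝ) : EReal) ≤ mahlerOmegaN ξ n := by
    filter_upwards [eventually_ge_atTop 24] with n hn
    refine le_trans ?_ (sub_one_div_le_mahlerOmegaN_of_transcendental hξ (q := n / 3) (by omega))
    have h3 : (n : ℝ) ≤ 3 * (n / 3 : ℕ) + 2 := by
      exact_mod_cast (by omega : n ≤ 3 * (n / 3) + 2)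
    have h24 : (24 : ℝ) ≤ n := by exact_mod_cast hn
    rw [EReal.coe_le_coe_iff, le_div_iff₀ (by positivity)]
    linarith
  exact (EReal.coe_pos.mpr (by norm_num)).trans_le (le_limsup_of_frequently_le hω.frequently)

/-- A complex number is algebraic over ℚ iff its Mahler exponent `ω` vanishes,
i.e. iff it is an A-number in Mahler's classification. -/
theorem isAlgebraic_iff_mahlerOmega_eq_zero (ξ : ℂ) :
    IsAlgebraic ℚ ξ ↔ mahlerOmega ξ = 0 := by
  refine ⟨fun hξ => (mahlerOmega_nonpos_of_isAlgebraic hξ).antisymm (mahlerOmega_nonneg ξ),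
    fun h => ?_⟩
  by_contra hξ
  exact (mahlerOmega_pos_of_transcendental hξ).ne' h
end

section
/- Let (αₙ)_{n≥1} be an enumeration of the complex numbers algebraic over ℚ, and define 𝒰(w,z) = Σ_{n=1}^∞ [wⁿ / ((1 + Σ_{k=1}^{n} |σₖ(α₁,…,αₙ)|)(|w|ⁿ + 1) · n!)] · ∏_{k=1}^{n} (z − αₖ). Then for every fixed w ∈ ℂ, the function z ↦ 𝒰(w,z) is analytic on all of ℂ (an entire function). -/
open Finset

/-- `a` (restricted to indices `n ≥ 1`) is an enumeration of the complex numbers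
that are algebraic over ℚ: a bijection from the positive integers onto the set of
algebraic numbers. -/
def IsAlgEnumeration (a : ℕ → ℂ) : Prop :=
  Set.BijOn a (Set.Ici 1) {x : ℂ | IsAlgebraic ℚ x}

/-- The `k`-th elementary symmetric function `σ_k (a 1, …, a n)`:
the sum of all products of `k` distinct terms among `a 1, …, a n`. -/
noncomputable def esymmVal (a : ℕ → ℂ) (n k : ℕ) : ℂ :=
  ∑ s ∈ Finset.powersetCard k (Finset.Icc 1 n), ∏ i ∈ s, a i

/-- The `n`-th term (for `n ≥ 1`) of the series defining the function `𝒰`: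
`wⁿ / ((1 + Σ_{k=1}^n |σ_k(α₁,…,αₙ)|) (|w|ⁿ + 1) n!) ⋅ (z - α₁) ⋯ (z - αₙ)`. -/
noncomputable def Uterm (a : ℕ → ℂ) (w z : ℂ) (n : ℕ) : ℂ :=
  w ^ n /
      (((1 + ∑ k ∈ Finset.Icc 1 n, ‖esymmVal a n k‖ : ℝ) : ℂ) *
        (((‖w‖ ^ n + 1 : ℝ) : ℂ)) * (Nat.factorial n : ℂ)) *
    ∏ k ∈ Finset.Icc 1 n, (z - a k)

/-- The function `𝒰(w, z) = Σ_{n=1}^∞ Uterm a w z n`. -/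
noncomputable def U (a : ℕ → ℂ) (w z : ℂ) : ℂ :=
  ∑' n : ℕ, Uterm a w z (n + 1)

/-! Expanding `∏ (z - αₖ)` by Vieta's formulas shows that for `‖z‖ ≤ R`, `R ≥ 1`, it is at most
`Rⁿ (1 + Σₖ ‖σₖ‖)`, so the `n`-th term of the series is at most `Rⁿ / n!` on the disc of radius `R`.
The series therefore converges uniformly on every disc, and its sum is holomorphic there. -/

open Polynomial in
lemma prod_sub_eq_sum_esymmVal (a : ℕ → ℂ) (n : ℕ) (z : ℂ) :
    ∏ k ∈ Icc 1 n, (z - a k) =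
      ∑ j ∈ range (n + 1), (-1) ^ j * (esymmVal a n j * z ^ (n - j)) := by
  have h := congrArg (eval z) (Multiset.prod_X_sub_X_eq_sum_esymm ((Icc 1 n).val.map a))
  simp only [eval_multiset_prod, eval_finsetSum, Multiset.map_map, Multiset.card_map,
    Function.comp_def, eval_sub, eval_X, eval_C, eval_mul, eval_pow, eval_neg, eval_one,
    Finset.esymm_map_val, Finset.card_val, Nat.card_Icc, add_tsub_cancel_right] at h
  rwa [Finset.prod_eq_multiset_prod]

lemma esymmVal_zero (a : ℕ → ℂ) (n : ℕ) : esymmVal a n 0 = 1 := by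
  simp [esymmVal]

lemma one_add_sum_norm_esymmVal (a : ℕ → ℂ) (n : ℕ) :
    1 + ∑ k ∈ Icc 1 n, ‖esymmVal a n k‖ = ∑ k ∈ range (n + 1), ‖esymmVal a n k‖ := by
  rw [Nat.range_succ_eq_Icc_zero, ← insert_Icc_succ_left_eq_Icc n.zero_le,
    sum_insert (by simp), esymmVal_zero, norm_one, Order.succ_eq_add_one, zero_add]

lemma norm_prod_sub_le (a : ℕ → ℂ) (n : ℕ) {z : ℂ} {R : ℝ} (hR : 1 ≤ R) (hz : ‖z‖ ≤ R) :
    ‖∏ k ∈ Icc 1 n, (z - a k)‖ ≤ R ^ n * (1 + ∑ k ∈ Icc 1 n, ‖esymmVal a n k‖) := by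
  rw [prod_sub_eq_sum_esymmVal, one_add_sum_norm_esymmVal, mul_sum]
  refine (norm_sum_le _ _).trans (sum_le_sum fun j _ => ?_)
  rw [norm_mul, norm_pow, norm_neg, norm_one, one_pow, one_mul, norm_mul, norm_pow, mul_comm]
  gcongr
  exact (pow_le_pow_left₀ (norm_nonneg z) hz _).trans (pow_le_pow_right₀ hR (Nat.sub_le n j))

lemma norm_Uterm_le (a : ℕ → ℂ) (w : ℂ) (n : ℕ) {z : ℂ} {R : ℝ} (hR : 1 ≤ R) (hz : ‖z‖ ≤ R) :
    ‖Uterm a w z n‖ ≤ R ^ n / n.factorial := by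
  set S := 1 + ∑ k ∈ Icc 1 n, ‖esymmVal a n k‖
  have hS : 0 < S := by positivity
  rw [Uterm, norm_mul, norm_div, norm_pow, norm_mul, norm_mul, Complex.norm_real,
    Complex.norm_real, Complex.norm_natCast, Real.norm_of_nonneg hS.le,
    Real.norm_of_nonneg (by positivity)]
  calc ‖w‖ ^ n / (S * (‖w‖ ^ n + 1) * n.factorial) * ‖∏ k ∈ Icc 1 n, (z - a k)‖
      ≤ (‖w‖ ^ n + 1) / (S * (‖w‖ ^ n + 1) * n.factorial) * (R ^ n * S) := by
        gcongr
        · linarith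
        · exact norm_prod_sub_le a n hR hz
    _ = R ^ n / n.factorial := by field_simp

lemma differentiable_Uterm (a : ℕ → ℂ) (w : ℂ) (n : ℕ) :
    Differentiable ℂ fun z => Uterm a w z n := by
  unfold Uterm
  fun_prop

lemma differentiableOn_U_ball (a : ℕ → ℂ) (w : ℂ) {R : ℝ} (hR : 1 ≤ R) :
    DifferentiableOn ℂ (U a w) (Metric.ball 0 R) :=
  Complex.differentiableOn_tsum_of_summable_norm
    ((summable_nat_add_iff 1).2 (Real.summable_pow_div_factorial R))
    (fun n => (differentiable_Uterm a w (n + 1)).differentiableOn) Metric.isOpen_ball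
    fun n _ hz => norm_Uterm_le a w (n + 1) hR (mem_ball_zero_iff.1 hz).le

lemma differentiable_U (a : ℕ → ℂ) (w : ℂ) : Differentiable ℂ (U a w) := fun z =>
  (differentiableOn_U_ball a w (R := ‖z‖ + 1) (by simp)).differentiableAt
    (Metric.isOpen_ball.mem_nhds (by simp))

theorem U_analyticAt_general (a : ℕ → ℂ) (w : ℂ) (z : ℂ) :
    AnalyticAt ℂ (fun x : ℂ => U a w x) z :=
  (differentiable_U a w).analyticAt z

/-- For each fixed `w`, the function `z ↦ 𝒰(w, z)` is entire. -/
theorem U_analyticAt (a : ℕ → ℂ) (ha : IsAlgEnumeration a) (w : ℂ) (z : ℂ) :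
    AnalyticAt ℂ (fun x : ℂ => U a w x) z :=
  U_analyticAt_general a w z
end
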